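/- For every integer n ≥ 1 and real x: Σ_{k=0}^∞ J_{(2k+1)n}(x)² = 1/(4n) + ((-1)^n/(4n))·J_0(2x) + (1/(2n))·Σ_{ℓ=1}^{n-1} (-1)^ℓ J_0(2x·sin(πℓ/(2n))). -/

import Mathlib

open scoped Real

/-- Bessel function of the first kind of integer order `m`,
defined by `J_m(z) = (1/2π) ∫_0^{2π} e^{i z sin θ - i m θ} dθ`. -/
noncomputable def besselJ (m : ℤ) (z : ℂ) : ℂ :=
  (1 / (2 * Real.pi)) * ∫ θ in (0:ℝ)..(2 * Real.pi),
    Complex.exp (z * Complex.sin (θ:ℂ) * Complex.I - (m:ℂ) * (θ:ℂ) * Complex.I)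

/-! For real `x`, the function `f_a(θ) = exp (i x sin (θ + a))` on `ℝ / 2πℤ` has Fourier
coefficients `e^{ima} J_m(x)`, and `f_a · conj f_0 = exp (i · 2x sin (a/2) · cos (θ + a/2))` has
mean `J_0(2x sin (a/2))`. Parseval's identity for `⟪f_0, f_a⟫` therefore gives
`∑ₘ e^{ima} J_m(x)² = J_0(2x sin (a/2))`. Averaging over `a = πℓ/n`, `ℓ < 2n`, against the signs
`(-1)^ℓ` keeps exactly the orders `m ≡ n (mod 2n)`, i.e. the odd multiples of `n`; then
`J_{-m}² = J_m²` folds them onto `k ≥ 0`, and `ℓ ↦ 2n - ℓ` folds the finite sum onto `1 ≤ ℓ < n`. -/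

open Complex Function Finset MeasureTheory
open scoped ComplexConjugate

lemma besselJ_integrand_periodic (m : ℤ) (z : ℂ) :
    Periodic (fun θ : ℝ => exp (z * sin θ * I - m * θ * I)) (2 * π) := by
  intro θ
  have hshift : z * sin ↑(θ + 2 * π) * I - m * ↑(θ + 2 * π) * I =
      (z * sin θ * I - m * θ * I) - m * (2 * π * I) := by
    push_cast
    rw [sin_add_two_pi]
    ring
  simp only [hshift, exp_sub, exp_int_mul_two_pi_mul_I, div_one]

lemma integral_besselJ_integrand {a b : ℝ} (hab : b = a + 2 * π) (m : ℤ) (z : ℂ) :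
    ∫ θ in a..b, exp (z * sin θ * I - m * θ * I) = 2 * π * besselJ m z := by
  rw [hab, (besselJ_integrand_periodic m z).intervalIntegral_add_eq a 0, zero_add, besselJ]
  field_simp

lemma besselJ_neg (m : ℤ) (z : ℂ) : besselJ (-m) z = (-1) ^ m * besselJ m z := by
  have hreflect : ∀ θ : ℝ, exp (z * sin θ * I - ((-m : ℤ) : ℂ) * θ * I) =
      (-1) ^ m * exp (z * sin ↑(π - θ) * I - m * ↑(π - θ) * I) := by
    intro θ
    rw [← exp_pi_mul_I, ← exp_int_mul, ← exp_add]
    push_cast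
    rw [sin_pi_sub]
    ring_nf
  rw [besselJ, intervalIntegral.integral_congr fun θ _ => hreflect θ,
    intervalIntegral.integral_const_mul,
    intervalIntegral.integral_comp_sub_left (fun θ : ℝ => exp (z * sin θ * I - m * θ * I)) π,
    integral_besselJ_integrand (by ring)]
  field_simp

lemma besselJ_sq_neg (m : ℤ) (z : ℂ) : besselJ (-m) z ^ 2 = besselJ m z ^ 2 := by
  have hsign : ((-1 : ℂ) ^ m) ^ 2 = 1 := by
    rw [← zpow_natCast, ← zpow_mul, mul_comm, zpow_mul]
    norm_num
  rw [besselJ_neg, mul_pow, hsign, one_mul]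

lemma conj_besselJ_ofReal (m : ℤ) (x : ℝ) : conj (besselJ m x) = besselJ m x := by
  have hreflect : ∀ θ : ℝ, conj (exp (x * sin θ * I - m * θ * I)) =
      exp (x * sin ↑(-θ) * I - m * ↑(-θ) * I) := by
    intro θ
    rw [← exp_conj, ← ofReal_sin]
    simp only [map_sub, map_mul, conj_ofReal, conj_I, map_intCast, ofReal_neg, sin_neg]
    push_cast
    ring_nf
  conv_lhs => rw [besselJ, map_mul, ← intervalIntegral.intervalIntegral_conj]
  rw [intervalIntegral.integral_congr fun θ _ => hreflect θ,
    intervalIntegral.integral_comp_neg (fun θ : ℝ => exp (x * sin θ * I - m * θ * I)),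
    integral_besselJ_integrand (by ring)]
  rw [map_div₀, map_one, map_mul, conj_ofReal, map_ofNat]
  field_simp

lemma besselJ_zero_zero : besselJ 0 0 = 1 := by
  simp only [besselJ, Int.cast_zero, zero_mul, sub_self, exp_zero, intervalIntegral.integral_const,
    sub_zero, real_smul, ofReal_mul, ofReal_ofNat, mul_one]
  field_simp

instance : Fact (0 < 2 * π) := ⟨Real.two_pi_pos⟩

noncomputable def expSinCircle (z : ℂ) (a : ℝ) : C(AddCircle (2 * π), ℂ) where
  toFun := Periodic.lift (f := fun θ : ℝ => exp (z * sin ↑(θ + a) * I)) fun θ => by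
    simp only [add_right_comm θ, ofReal_add _ (2 * π), ofReal_mul, ofReal_ofNat, sin_add_two_pi]
  continuous_toFun := continuous_coinduced_dom.mpr <|
    show Continuous fun θ : ℝ => exp (z * sin ↑(θ + a) * I) by fun_prop

@[simp]
lemma expSinCircle_coe (z : ℂ) (a θ : ℝ) :
    expSinCircle z a θ = exp (z * sin ↑(θ + a) * I) := rfl

lemma fourierCoeff_expSinCircle (z : ℂ) (a : ℝ) (m : ℤ) :
    fourierCoeff (expSinCircle z a) m = exp (m * a * I) * besselJ m z := by
  have hintegrand : ∀ θ : ℝ, fourier (-m) (θ : AddCircle (2 * π)) • expSinCircle z a θ =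
      exp (m * a * I) * exp (z * sin ↑(θ + a) * I - m * ↑(θ + a) * I) := by
    intro θ
    rw [fourier_coe_apply, expSinCircle_coe, smul_eq_mul, ← exp_add, ← exp_add]
    congr 1
    push_cast
    field_simp
    ring
  rw [fourierCoeff_eq_intervalIntegral _ m 0, zero_add,
    intervalIntegral.integral_congr fun θ _ => hintegrand θ, intervalIntegral.integral_const_mul,
    intervalIntegral.integral_comp_add_right (fun θ : ℝ => exp (z * sin θ * I - m * θ * I)),
    integral_besselJ_integrand (by ring), real_smul]
  push_cast
  field_simp

lemma expSinCircle_mul_conj (x a : ℝ) (θ : AddCircle (2 * π)) :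
    expSinCircle x a θ * conj (expSinCircle x 0 θ) =
      expSinCircle ↑(2 * x * Real.sin (a / 2)) (a / 2 + π / 2) θ := by
  induction θ using QuotientAddGroup.induction_on with | H θ => ?_
  have hdiff : x * Real.sin (θ + a) - x * Real.sin θ =
      2 * x * Real.sin (a / 2) * Real.sin (θ + (a / 2 + π / 2)) := by
    rw [← add_assoc, Real.sin_add_pi_div_two, ← mul_sub, Real.sin_sub_sin]
    ring_nf
  simp only [expSinCircle_coe, ← exp_conj, ← exp_add, ← ofReal_sin, map_mul, conj_ofReal, conj_I]
  congr 1
  rw [add_zero, ← ofReal_mul (2 * x * Real.sin (a / 2)), ← hdiff]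
  push_cast
  ring

lemma inner_toLp_expSinCircle (x a : ℝ) :
    inner ℂ (ContinuousMap.toLp (E := ℂ) 2 AddCircle.haarAddCircle ℂ (expSinCircle x 0))
      (ContinuousMap.toLp (E := ℂ) 2 AddCircle.haarAddCircle ℂ (expSinCircle x a)) =
      besselJ 0 ↑(2 * x * Real.sin (a / 2)) := by
  rw [ContinuousMap.inner_toLp]
  simp_rw [expSinCircle_mul_conj]
  calc ∫ θ, expSinCircle ↑(2 * x * Real.sin (a / 2)) (a / 2 + π / 2) θ ∂AddCircle.haarAddCircle
      = fourierCoeff (expSinCircle ↑(2 * x * Real.sin (a / 2)) (a / 2 + π / 2)) 0 := by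
        simp [fourierCoeff]
    _ = besselJ 0 ↑(2 * x * Real.sin (a / 2)) := by
        simp [fourierCoeff_expSinCircle]

lemma hasSum_exp_mul_besselJ_sq (x a : ℝ) :
    HasSum (fun m : ℤ => exp (m * a * I) * besselJ m x ^ 2)
      (besselJ 0 ↑(2 * x * Real.sin (a / 2))) := by
  let F (c : ℝ) := ContinuousMap.toLp (E := ℂ) 2 AddCircle.haarAddCircle ℂ (expSinCircle x c)
  have hcoeff (c : ℝ) (m : ℤ) : inner ℂ (fourierBasis m) (F c) = exp (m * c * I) * besselJ m x := by
    rw [← HilbertBasis.repr_apply_apply, fourierBasis_repr, fourierCoeff_toLp,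
      fourierCoeff_expSinCircle]
  rw [← inner_toLp_expSinCircle]
  refine (fourierBasis.hasSum_inner_mul_inner (F 0) (F a)).congr_fun fun m => ?_
  rw [← inner_conj_symm, hcoeff, hcoeff, ofReal_zero, mul_zero, zero_mul, exp_zero, one_mul,
    conj_besselJ_ofReal]
  ring

lemma Finset.sum_range_two_mul_eq_of_reflect {M : Type*} [AddCommMonoid M] (f : ℕ → M) {n : ℕ}
    (hn : 0 < n) (hf : ∀ ℓ ∈ Ico 1 n, f (2 * n - ℓ) = f ℓ) :
    ∑ ℓ ∈ range (2 * n), f ℓ = f 0 + f n + 2 • ∑ ℓ ∈ Ico 1 n, f ℓ := by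
  have hupper : ∑ ℓ ∈ Ico (n + 1) (2 * n), f ℓ = ∑ ℓ ∈ Ico 1 n, f ℓ := by
    rw [← sum_congr rfl hf, sum_Ico_reflect f 1 (by omega)]
    congr 2
    omega
  rw [← sum_range_add_sum_Ico f (by omega : n + 1 ≤ 2 * n), hupper, sum_range_succ,
    sum_range_eq_add_Ico f hn, two_nsmul]
  abel

lemma geom_sum_eq_ite_of_pow_eq_one {K : Type*} [DivisionRing K] [DecidableEq K] {r : K} {N : ℕ}
    (h : r ^ N = 1) :
    ∑ i ∈ range N, r ^ i = if r = 1 then (N : K) else 0 := by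
  split_ifs with hr
  · simp [hr]
  · rw [geom_sum_eq hr, h, sub_self, zero_div]

lemma sum_range_neg_one_pow_mul_exp {n : ℕ} (hn : n ≠ 0) (m : ℤ) :
    ∑ ℓ ∈ range (2 * n), (-1) ^ ℓ * exp (m * ↑(π * ℓ / n) * I) =
      if (2 * n : ℤ) ∣ m + n then (2 * n : ℂ) else 0 := by
  have hterm (ℓ : ℕ) :
      (-1) ^ ℓ * exp (m * ↑(π * ℓ / n) * I) = (exp (2 * π * I / ↑(2 * n)) ^ (m + n)) ^ ℓ := by
    rw [← exp_int_mul, ← exp_nat_mul, ← exp_pi_mul_I, ← exp_nat_mul, ← exp_add]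
    congr 1
    push_cast
    field_simp
    ring
  have hζ := isPrimitiveRoot_exp (2 * n) (by omega)
  simp_rw [hterm]
  generalize exp (2 * π * I / ↑(2 * n)) = ζ at hζ ⊢
  have hpow : (ζ ^ (m + n)) ^ (2 * n) = 1 := by
    rw [← zpow_natCast, ← zpow_mul, mul_comm, zpow_mul, zpow_natCast, hζ.pow_eq_one, one_zpow]
  rw [geom_sum_eq_ite_of_pow_eq_one hpow]
  simp only [hζ.zpow_eq_one_iff_dvd]
  push_cast
  congr 1

lemma hasSum_besselJ_sq_odd_mul_int {n : ℕ} (hn : n ≠ 0) (x : ℝ) :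
    HasSum (fun j : ℤ => besselJ ((2 * j + 1) * n) x ^ 2) (1 / (2 * n) *
      ∑ ℓ ∈ range (2 * n), (-1) ^ ℓ * besselJ 0 ↑(2 * x * Real.sin (π * ℓ / (2 * n)))) := by
  have hfilter (m : ℤ) : ∑ ℓ ∈ range (2 * n),
      1 / (2 * n) * (-1) ^ ℓ * (exp (m * ↑(π * ℓ / n) * I) * besselJ m x ^ 2) =
      if (2 * n : ℤ) ∣ m + n then besselJ m x ^ 2 else 0 := by
    have hfactor : ∑ ℓ ∈ range (2 * n),
        1 / (2 * n) * (-1) ^ ℓ * (exp (m * ↑(π * ℓ / n) * I) * besselJ m x ^ 2) =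
        1 / (2 * n) * (∑ ℓ ∈ range (2 * n), (-1) ^ ℓ * exp (m * ↑(π * ℓ / n) * I)) *
          besselJ m x ^ 2 := by
      rw [mul_sum, sum_mul]
      exact sum_congr rfl fun _ _ => by ring
    rw [hfactor, sum_range_neg_one_pow_mul_exp hn]
    split_ifs
    · field_simp
    · simp
  have hsum := hasSum_sum fun ℓ (_ : ℓ ∈ range (2 * n)) =>
    (hasSum_exp_mul_besselJ_sq x (π * ℓ / n)).mul_left (1 / (2 * n) * (-1 : ℂ) ^ ℓ)
  simp_rw [hfilter] at hsum
  have hinj : Injective fun j : ℤ => (2 * j + 1) * n := fun i j hij => by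
    simpa [hn] using hij
  have hoff : ∀ m ∉ Set.range fun j : ℤ => (2 * j + 1) * n,
      (if (2 * n : ℤ) ∣ m + n then besselJ m x ^ 2 else 0) = 0 := by
    rintro m hm
    rw [if_neg]
    rintro ⟨k, hk⟩
    exact hm ⟨k - 1, by linarith⟩
  convert (hinj.hasSum_iff hoff).mpr hsum using 1
  · ext j
    rw [comp_apply, if_pos ⟨j + 1, by ring⟩]
  · rw [mul_sum]
    refine sum_congr rfl fun ℓ _ => ?_
    rw [div_div, mul_comm (n : ℝ) 2]
    ring

lemma hasSum_besselJ_sq_odd_mul {n : ℕ} (hn : n ≠ 0) (x : ℝ) :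
    HasSum (fun k : ℕ => besselJ ((2 * k + 1) * n) x ^ 2) (1 / (4 * n) *
      ∑ ℓ ∈ range (2 * n), (-1) ^ ℓ * besselJ 0 ↑(2 * x * Real.sin (π * ℓ / (2 * n)))) := by
  have hpair := (hasSum_besselJ_sq_odd_mul_int hn x).nat_add_neg_add_one
  rw [show (1 : ℂ) / (4 * n) = 1 / (2 * n) / 2 by ring, div_mul_eq_mul_div]
  refine (hpair.div_const 2).congr_fun fun k => ?_
  rw [show (2 * -((k : ℤ) + 1) + 1) * n = -((2 * k + 1) * n) by ring, besselJ_sq_neg]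
  ring

theorem statement15 (n : ℕ) (hn : 1 ≤ n) (x : ℝ) :
    (∑' k : ℕ, besselJ ((2 * k + 1) * n) x ^ 2) =
      1 / (4 * (n:ℂ)) + ((-1 : ℂ) ^ n / (4 * (n:ℂ))) * besselJ 0 ((2 * x : ℝ) : ℂ) +
        (1 / (2 * (n:ℂ))) * ∑ ℓ ∈ Finset.Ico 1 n,
          (-1 : ℂ) ^ ℓ * besselJ 0 ((2 * x * Real.sin (π * ℓ / (2 * n)) : ℝ) : ℂ) := by
  have hreflect : ∀ ℓ ∈ Ico 1 n,
      (-1 : ℂ) ^ (2 * n - ℓ) * besselJ 0 ↑(2 * x * Real.sin (π * ↑(2 * n - ℓ) / (2 * n))) =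
        (-1) ^ ℓ * besselJ 0 ↑(2 * x * Real.sin (π * ℓ / (2 * n))) := by
    intro ℓ hℓ
    have hℓn : ℓ ≤ n := (mem_Ico.mp hℓ).2.le
    have hangle : π * ↑(2 * n - ℓ) / (2 * n) = π - π * ℓ / (2 * n) := by
      rw [Nat.cast_sub (by omega)]
      field_simp
      push_cast
      ring
    rw [hangle, Real.sin_pi_sub, show 2 * n - ℓ = ℓ + 2 * (n - ℓ) by omega, pow_add, pow_mul,
      neg_one_sq, one_pow, mul_one]
  rw [(hasSum_besselJ_sq_odd_mul (by omega) x).tsum_eq,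
    sum_range_two_mul_eq_of_reflect _ hn hreflect]
  have hn' : (n : ℝ) ≠ 0 := Nat.cast_ne_zero.mpr (by omega)
  have hhalf : π * n / (2 * n) = π / 2 := by field_simp
  simp only [Nat.cast_zero, mul_zero, zero_div, Real.sin_zero, ofReal_zero, besselJ_zero_zero,
    pow_zero, hhalf, Real.sin_pi_div_two, mul_one, nsmul_eq_mul]
  field_simp
  ring
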